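/- arXiv:2209.00235 — 4 statements merged into one kernel-verified Lean document; each statement's English description precedes it below -/
import Mathlib

section
/- Let $0<\alpha<1$, $k>0$, $s_0>0$. Define $w_0 = \frac{k^\alpha}{\Gamma(\alpha+2)}$ and, for $j\ge 1$, $w_j = \frac{t_{j+1}^{\alpha+1} - 2t_j^{\alpha+1} + t_{j-1}^{\alpha+1}}{k\,\Gamma(\alpha+2)}$ where $t_j=jk$. Then each $w_j>0$, and there exists a constant $\mathcal{C}_\alpha>0$ depending only on $\alpha$ such that $\sum_{n=0}^\infty w_n e^{-n s_0} \le \frac{k^\alpha}{\Gamma(\alpha+2)}\left(1 + \frac{\mathcal{C}_\alpha}{s_0}\right)$. In particular, if $k^\alpha \le \frac{s_0\,\Gamma(\alpha+2)}{s_0 + \mathcal{C}_\alpha}$, then $\sum_{n=0}^\infty w_n e^{-n s_0} \le 1$. -/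
/-! The weights are second differences of the convex function `t ↦ t ^ (α + 1)`, hence positive.
Comparing secants with tangents bounds the second difference with step `k` at `t ≥ k` by `k` times
the increase of the derivative `(α + 1) t ^ α` over an interval of length `2k`, and subadditivity of
`t ↦ t ^ α` bounds that increase by `(α + 1) (2k) ^ α`. So `w j ≤ C k ^ α / Γ(α + 2)` for `j ≥ 1`
with `C = (α + 1) 2 ^ α`, and the tail of the series is dominated by a geometric series whose sum
`1 / (e ^ s₀ - 1)` is at most `1 / s₀`. -/

open Real Set

theorem StrictConvexOn.second_diff_pos {S : Set ℝ} {f : ℝ → ℝ} (hf : StrictConvexOn ℝ S f)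
    {x h : ℝ} (hl : x - h ∈ S) (hr : x + h ∈ S) (hh : 0 < h) :
    0 < f (x + h) - 2 * f x + f (x - h) := by
  have hmid := hf.2 hl hr (by linarith) (by norm_num : (0:ℝ) < 1 / 2) (by norm_num : (0:ℝ) < 1 / 2)
    (by norm_num)
  simp only [smul_eq_mul] at hmid
  rw [show 1 / 2 * (x - h) + 1 / 2 * (x + h) = x by ring] at hmid
  linarith

theorem ConvexOn.second_diff_le {S : Set ℝ} {f : ℝ → ℝ} (hf : ConvexOn ℝ S f)
    {x h a b : ℝ} (hl : x - h ∈ S) (hx : x ∈ S) (hr : x + h ∈ S) (hh : 0 < h)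
    (ha : HasDerivAt f a (x - h)) (hb : HasDerivAt f b (x + h)) :
    f (x + h) - 2 * f x + f (x - h) ≤ h * (b - a) := by
  have hright := hf.slope_le_of_hasDerivAt hx hr (by linarith) hb
  have hleft := hf.le_slope_of_hasDerivAt hl hx (by linarith) ha
  rw [slope_def_field, add_sub_cancel_left, div_le_iff₀ hh] at hright
  rw [slope_def_field, sub_sub_cancel, le_div_iff₀ hh] at hleft
  linarith

theorem rpow_add_one_second_diff_le {α x h : ℝ} (hα0 : 0 ≤ α) (hα1 : α ≤ 1) (hh : 0 < h)
    (hhx : h ≤ x) :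
    (x + h) ^ (α + 1) - 2 * x ^ (α + 1) + (x - h) ^ (α + 1) ≤ (α + 1) * 2 ^ α * h ^ (α + 1) := by
  have hderiv : ∀ y, HasDerivAt (fun y : ℝ => y ^ (α + 1)) ((α + 1) * y ^ α) y := fun y => by
    simpa using hasDerivAt_rpow_const (x := y) (p := α + 1) (Or.inr (by linarith))
  have hsecond := (convexOn_rpow (by linarith : (1:ℝ) ≤ α + 1)).second_diff_le
    (mem_Ici.2 (by linarith)) (mem_Ici.2 (by linarith)) (mem_Ici.2 (by linarith)) hh
    (hderiv (x - h)) (hderiv (x + h))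
  have hsub : (x + h) ^ α ≤ (x - h) ^ α + 2 ^ α * h ^ α := by
    calc (x + h) ^ α = ((x - h) + 2 * h) ^ α := by ring_nf
      _ ≤ (x - h) ^ α + (2 * h) ^ α := rpow_add_le_add_rpow (by linarith) (by linarith) hα0 hα1
      _ = (x - h) ^ α + 2 ^ α * h ^ α := by rw [mul_rpow (by norm_num) hh.le]
  calc (x + h) ^ (α + 1) - 2 * x ^ (α + 1) + (x - h) ^ (α + 1)
      ≤ h * ((α + 1) * (x + h) ^ α - (α + 1) * (x - h) ^ α) := hsecond
    _ ≤ h * ((α + 1) * (2 ^ α * h ^ α)) := by gcongr; nlinarith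
    _ = (α + 1) * 2 ^ α * h ^ (α + 1) := by rw [rpow_add_one hh.ne']; ring

theorem exp_neg_div_one_sub_exp_neg_le {s : ℝ} (hs : 0 < s) :
    exp (-s) / (1 - exp (-s)) ≤ 1 / s := by
  have hexp : s + 1 ≤ exp s := add_one_le_exp s
  rw [div_le_div_iff₀ (by simpa using hs) hs, exp_neg]
  field_simp [(exp_pos s).ne']
  nlinarith [exp_pos s]

theorem summable_mul_exp_neg_and_tsum_le {w : ℕ → ℝ} {B s : ℝ} (hw : ∀ n, 0 ≤ w n)
    (hB : ∀ n, 1 ≤ n → w n ≤ B) (hs : 0 < s) :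
    Summable (fun n : ℕ => w n * exp (-n * s)) ∧
      ∑' n : ℕ, w n * exp (-n * s) ≤ w 0 + B / s := by
  set r := exp (-s)
  have hr0 : 0 ≤ r := (exp_pos _).le
  have hr1 : r < 1 := exp_lt_one_iff.2 (by linarith)
  have hpow : ∀ n : ℕ, exp (-n * s) = r ^ n := fun n => by
    rw [← exp_nat_mul]; ring_nf
  have hB0 : 0 ≤ B := (hw 1).trans (hB 1 le_rfl)
  have hgeom : HasSum (fun n : ℕ => B * r * r ^ n) (B * r / (1 - r)) := by
    simpa [div_eq_mul_inv] using (hasSum_geometric_of_lt_one hr0 hr1).mul_left (B * r)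
  have htail : ∀ n : ℕ, w (n + 1) * exp (-(n + 1 : ℕ) * s) ≤ B * r * r ^ n := fun n => by
    rw [hpow, pow_succ', mul_assoc B]
    exact mul_le_mul_of_nonneg_right (hB _ (by omega)) (by positivity)
  have hsumm_tail : Summable (fun n : ℕ => w (n + 1) * exp (-(n + 1 : ℕ) * s)) :=
    hgeom.summable.of_nonneg_of_le (fun n => mul_nonneg (hw _) (exp_pos _).le) htail
  have hsumm := (summable_nat_add_iff (f := fun n : ℕ => w n * exp (-n * s)) 1).1 hsumm_tail
  refine ⟨hsumm, ?_⟩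
  rw [hsumm.tsum_eq_zero_add]
  have htail_le : ∑' n : ℕ, w (n + 1) * exp (-(n + 1 : ℕ) * s) ≤ B * r / (1 - r) :=
    (hsumm_tail.tsum_le_tsum htail hgeom.summable).trans_eq hgeom.tsum_eq
  have hratio : B * r / (1 - r) ≤ B / s := by
    rw [mul_div_assoc, div_eq_mul_one_div B s]
    exact mul_le_mul_of_nonneg_left (exp_neg_div_one_sub_exp_neg_le hs) hB0
  simp only [CharP.cast_eq_zero, neg_zero, zero_mul, exp_zero, mul_one]
  linarith

theorem stmt_6 (α : ℝ) (hα0 : 0 < α) (hα1 : α < 1) :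
    ∃ C : ℝ, 0 < C ∧
      ∀ (k s0 : ℝ), 0 < k → 0 < s0 →
        ∀ w : ℕ → ℝ,
          (w 0 = k ^ α / Real.Gamma (α + 2)) →
          (∀ j : ℕ, 1 ≤ j →
            w j = ((((j : ℝ) + 1) * k) ^ (α + 1) - 2 * ((j : ℝ) * k) ^ (α + 1)
                      + (((j : ℝ) - 1) * k) ^ (α + 1)) / (k * Real.Gamma (α + 2))) →
          (∀ j : ℕ, 0 < w j) ∧
          Summable (fun n : ℕ => w n * Real.exp (-(n : ℝ) * s0)) ∧
          (∑' n : ℕ, w n * Real.exp (-(n : ℝ) * s0))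
              ≤ k ^ α / Real.Gamma (α + 2) * (1 + C / s0) ∧
          (k ^ α ≤ s0 * Real.Gamma (α + 2) / (s0 + C) →
            (∑' n : ℕ, w n * Real.exp (-(n : ℝ) * s0)) ≤ 1) := by
  set C := (α + 1) * (2 : ℝ) ^ α
  refine ⟨C, by positivity, fun k s0 hk hs0 w hw0 hwj => ?_⟩
  have hΓ : 0 < Gamma (α + 2) := Gamma_pos_of_pos (by linarith)
  have hw_succ : ∀ j : ℕ, 1 ≤ j → 0 < w j ∧ w j ≤ k ^ α / Gamma (α + 2) * C := by
    intro j hj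
    have hkj : k ≤ j * k := le_mul_of_one_le_left hk.le (by exact_mod_cast hj)
    rw [hwj j hj, show ((j : ℝ) + 1) * k = j * k + k by ring,
      show ((j : ℝ) - 1) * k = j * k - k by ring]
    constructor
    · exact div_pos ((strictConvexOn_rpow (by linarith)).second_diff_pos
        (mem_Ici.2 (by linarith)) (mem_Ici.2 (by positivity)) hk) (by positivity)
    · rw [div_le_iff₀ (by positivity)]
      calc _ ≤ C * k ^ (α + 1) := rpow_add_one_second_diff_le hα0.le hα1.le hk hkj
        _ = _ := by rw [rpow_add_one hk.ne']; field_simp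
  have hw_pos : ∀ j, 0 < w j := fun j => by
    rcases j.eq_zero_or_pos with rfl | hj
    · rw [hw0]; positivity
    · exact (hw_succ j hj).1
  obtain ⟨hsumm, htsum⟩ := summable_mul_exp_neg_and_tsum_le (fun n => (hw_pos n).le)
    (fun n hn => (hw_succ n hn).2) hs0
  have hbound : ∑' n : ℕ, w n * exp (-n * s0) ≤ k ^ α / Gamma (α + 2) * (1 + C / s0) := by
    rw [hw0] at htsum
    exact htsum.trans_eq (by ring)
  refine ⟨hw_pos, hsumm, hbound, fun hks => hbound.trans ?_⟩
  rw [le_div_iff₀ (by positivity)] at hks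
  rw [div_mul_eq_mul_div, div_le_one hΓ]
  calc k ^ α * (1 + C / s0) = k ^ α * (s0 + C) / s0 := by field_simp
    _ ≤ Gamma (α + 2) := by rw [div_le_iff₀ hs0]; linarith
end

section
/- Let $(g_j)_{j\ge0}$ be a real sequence with $\sum_j |g_j| r^{-j} < \infty$ for every $r>1$, so that $G(z)=\sum_{j\ge0} g_j z^{-j}$ is analytic on $\mathbf{D}=\{z\in\mathbb{C}: |z|>1\}$. If $\Re G(z) \ge 0$ for all $z\in\mathbf{D}$, then for every integer $M\ge 0$ and all real numbers $W_0, W_1, \dots, W_M$, $\sum_{j=0}^M \left(\sum_{p=0}^j g_p W_{j-p}\right) W_j \ge 0$. -/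
/-!
Dilating by `t ∈ (0, 1)` (that is, `g p ↦ g p t^p`, `W j ↦ W j t^j`) moves the problem to the
unit circle, where the generating function is absolutely convergent and continuous. There the
quadratic form is `(1 / 2π) ∫ Re G(e^{iθ}) |∑ W_j e^{ijθ}|² dθ ≥ 0`, because the `p`-th Fourier
coefficient of `|∑ W_j e^{ijθ}|²` is the autocorrelation `∑ W_j W_{j+p}`. Letting `t → 1` gives
the claim, the form being a polynomial in `t`.
-/

open Complex Finset Filter MeasureTheory

def convolutionForm (g W : ℕ → ℝ) (M : ℕ) : ℝ :=
  ∑ j ∈ range (M + 1), (∑ p ∈ range (j + 1), g p * W (j - p)) * W j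

def autocorrelation (W : ℕ → ℝ) (M p : ℕ) : ℝ :=
  ∑ j ∈ range (M + 1 - p), W j * W (p + j)

theorem convolutionForm_eq_sum_autocorrelation (g W : ℕ → ℝ) (M : ℕ) :
    convolutionForm g W M = ∑ p ∈ range (M + 1), g p * autocorrelation W M p := by
  simp only [autocorrelation, mul_sum]
  rw [← sum_range_diag_flip (M + 1) fun p t => g p * (W t * W (p + t))]
  refine sum_congr rfl fun j _ => ?_
  rw [sum_mul]
  refine sum_congr rfl fun p hp => ?_
  rw [Nat.add_sub_cancel' (Nat.lt_succ_iff.1 (mem_range.1 hp)), mul_assoc]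

theorem autocorrelation_eq_zero_of_lt {W : ℕ → ℝ} {M p : ℕ} (h : M < p) :
    autocorrelation W M p = 0 := by
  simp [autocorrelation, Nat.sub_eq_zero_of_le h]

theorem autocorrelation_eq_sum_sum_ite (W : ℕ → ℝ) (M p : ℕ) :
    autocorrelation W M p =
      ∑ j ∈ range (M + 1), ∑ k ∈ range (M + 1), if p + j = k then W j * W k else 0 := by
  simp only [sum_ite_eq, autocorrelation, ← sum_filter]
  refine sum_congr ?_ fun _ _ => rfl
  ext j
  simp only [mem_range, mem_filter]
  omega

theorem integral_exp_int_mul_mul_I (n : ℤ) :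
    ∫ θ in (0 : ℝ)..2 * Real.pi, exp (n * θ * I) = if n = 0 then 2 * Real.pi else 0 := by
  split_ifs with hn
  · simp [hn]
  · have hnI : (n : ℂ) * I ≠ 0 := by simp [hn]
    simp_rw [mul_right_comm _ _ I]
    rw [integral_exp_mul_complex hnI]
    have : (n : ℂ) * I * (2 * Real.pi : ℝ) = n * (2 * Real.pi * I) := by push_cast; ring
    rw [this, exp_int_mul_two_pi_mul_I]
    simp

theorem exp_pow_mul_normSq_eq_sum (w : ℕ → ℝ) (M p : ℕ) (θ : ℝ) :
    exp (θ * I) ^ p * normSq (∑ j ∈ range (M + 1), (w j : ℂ) * exp (θ * I) ^ j) =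
      ∑ j ∈ range (M + 1), ∑ k ∈ range (M + 1),
        (w j * w k : ℂ) * exp (((p + j - k : ℤ) : ℂ) * θ * I) := by
  rw [← mul_conj, map_sum, sum_mul_sum, mul_sum]
  refine sum_congr rfl fun j _ => ?_
  rw [mul_sum]
  refine sum_congr rfl fun k _ => ?_
  simp only [map_mul, map_natCast, conj_ofReal, ← exp_conj, conj_I, ← exp_nat_mul]
  calc _ = (w j * w k : ℂ) * (exp (p * (θ * I)) * exp (j * (θ * I)) * exp (k * (θ * -I))) := by
        ring
    _ = _ := by
      rw [← exp_add, ← exp_add]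
      congr 2
      push_cast
      ring

theorem integral_exp_pow_mul_normSq (w : ℕ → ℝ) (M p : ℕ) :
    ∫ θ in (0 : ℝ)..2 * Real.pi,
        exp (θ * I) ^ p * normSq (∑ j ∈ range (M + 1), (w j : ℂ) * exp (θ * I) ^ j) =
      2 * Real.pi * autocorrelation w M p := by
  simp_rw [exp_pow_mul_normSq_eq_sum, autocorrelation_eq_sum_sum_ite]
  simp only [ofReal_sum]
  rw [intervalIntegral.integral_finsetSum fun _ _ => ?_, mul_sum]
  · refine sum_congr rfl fun j _ => ?_
    rw [intervalIntegral.integral_finsetSum fun _ _ => ?_, mul_sum]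
    · refine sum_congr rfl fun k _ => ?_
      rw [intervalIntegral.integral_const_mul, integral_exp_int_mul_mul_I]
      have : (p : ℤ) + j - k = 0 ↔ p + j = k := by omega
      simp only [this]
      split_ifs <;> push_cast <;> ring
    · exact Continuous.intervalIntegrable (by fun_prop) _ _
  · exact Continuous.intervalIntegrable (by fun_prop) _ _

theorem norm_ofReal_mul_exp_mul_I_pow (c θ : ℝ) (p : ℕ) : ‖(c : ℂ) * exp (θ * I) ^ p‖ = |c| := by
  rw [norm_mul, norm_pow, norm_exp_ofReal_mul_I, one_pow, mul_one, norm_real, Real.norm_eq_abs]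

theorem continuous_tsum_mul_exp_mul_I_pow {c : ℕ → ℝ} (hc : Summable fun p => |c p|) :
    Continuous fun θ : ℝ => ∑' p, (c p : ℂ) * exp (θ * I) ^ p :=
  continuous_tsum (fun p => by fun_prop) hc fun p θ => (norm_ofReal_mul_exp_mul_I_pow _ θ p).le

theorem integral_tsum_mul_exp_mul_I_pow_mul_normSq {c : ℕ → ℝ} (hc : Summable fun p => |c p|)
    (w : ℕ → ℝ) (M : ℕ) :
    ∫ θ in (0 : ℝ)..2 * Real.pi, (∑' p, (c p : ℂ) * exp (θ * I) ^ p) *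
        normSq (∑ j ∈ range (M + 1), (w j : ℂ) * exp (θ * I) ^ j) =
      ((2 * Real.pi * ∑ p ∈ range (M + 1), c p * autocorrelation w M p : ℝ) : ℂ) := by
  set P : ℝ → ℂ := fun θ => ∑ j ∈ range (M + 1), (w j : ℂ) * exp (θ * I) ^ j
  have hsum : HasSum
      (fun p => ∫ θ in (0 : ℝ)..2 * Real.pi, (c p : ℂ) * exp (θ * I) ^ p * normSq (P θ))
      (∫ θ in (0 : ℝ)..2 * Real.pi, (∑' p, (c p : ℂ) * exp (θ * I) ^ p) * normSq (P θ)) := by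
    refine intervalIntegral.hasSum_integral_of_dominated_convergence
      (fun p θ => |c p| * normSq (P θ))
      (fun p => (by fun_prop : Continuous _).aestronglyMeasurable)
      (fun p => ae_of_all _ fun θ _ => ?_) (ae_of_all _ fun θ _ => hc.mul_right _) ?_
      (ae_of_all _ fun θ _ => (hc.of_norm_bounded fun p =>
        (norm_ofReal_mul_exp_mul_I_pow _ θ p).le).hasSum.mul_right _)
    · rw [norm_mul, norm_ofReal_mul_exp_mul_I_pow, norm_real,
        Real.norm_of_nonneg (normSq_nonneg _)]
    · simp_rw [tsum_mul_right]
      exact Continuous.intervalIntegrable (by fun_prop) _ _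
  have hterm (p : ℕ) :
      ∫ θ in (0 : ℝ)..2 * Real.pi, (c p : ℂ) * exp (θ * I) ^ p * normSq (P θ) =
        ((2 * Real.pi * (c p * autocorrelation w M p) : ℝ) : ℂ) := by
    simp_rw [mul_assoc]
    rw [intervalIntegral.integral_const_mul, integral_exp_pow_mul_normSq]
    push_cast
    ring
  refine (funext hterm ▸ hsum).unique ?_
  rw [mul_sum, ofReal_sum]
  refine hasSum_sum_of_ne_finset_zero fun p hp => ?_
  rw [autocorrelation_eq_zero_of_lt (by simpa using hp)]
  simp

theorem sum_mul_autocorrelation_nonneg {c : ℕ → ℝ} (hc : Summable fun p => |c p|)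
    (hre : ∀ v : ℂ, ‖v‖ = 1 → 0 ≤ (∑' p, (c p : ℂ) * v ^ p).re) (w : ℕ → ℝ) (M : ℕ) :
    0 ≤ ∑ p ∈ range (M + 1), c p * autocorrelation w M p := by
  have hG := continuous_tsum_mul_exp_mul_I_pow hc
  have hre_integral := intervalIntegral.intervalIntegral_re (μ := volume)
    (f := fun θ : ℝ => (∑' p, (c p : ℂ) * exp (θ * I) ^ p) *
      normSq (∑ j ∈ range (M + 1), (w j : ℂ) * exp (θ * I) ^ j))
    (Continuous.intervalIntegrable (by fun_prop) 0 (2 * Real.pi))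
  simp only [RCLike.re_to_complex, integral_tsum_mul_exp_mul_I_pow_mul_normSq hc w M,
    ofReal_re] at hre_integral
  rw [← mul_nonneg_iff_of_pos_left Real.two_pi_pos, ← hre_integral]
  refine intervalIntegral.integral_nonneg Real.two_pi_pos.le fun θ _ => ?_
  rw [re_mul_ofReal]
  exact mul_nonneg (hre _ (norm_exp_ofReal_mul_I θ)) (normSq_nonneg _)

theorem convolutionForm_dilate_nonneg {g : ℕ → ℝ}
    (hg : ∀ r : ℝ, 1 < r → Summable (fun j : ℕ => |g j| * r⁻¹ ^ j))
    (hpos : ∀ z : ℂ, 1 < ‖z‖ → 0 ≤ (∑' j : ℕ, (g j : ℂ) * z⁻¹ ^ j).re)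
    {t : ℝ} (ht : t ∈ Set.Ioo 0 1) (W : ℕ → ℝ) (M : ℕ) :
    0 ≤ convolutionForm (fun p => g p * t ^ p) (fun j => W j * t ^ j) M := by
  obtain ⟨ht0, ht1⟩ := ht
  have hc : Summable fun p => |g p * t ^ p| := by
    simpa [abs_mul, abs_of_pos ht0] using hg t⁻¹ (one_lt_inv₀ ht0 |>.2 ht1)
  have hre (v : ℂ) (hv : ‖v‖ = 1) : 0 ≤ (∑' p, ((g p * t ^ p : ℝ) : ℂ) * v ^ p).re := by
    have hz : 1 < ‖((t : ℂ) * v)⁻¹‖ := by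
      rw [norm_inv, norm_mul, hv, mul_one, norm_real, Real.norm_of_nonneg ht0.le]
      exact one_lt_inv₀ ht0 |>.2 ht1
    convert hpos _ hz using 4 with p
    push_cast
    rw [inv_inv, mul_pow, mul_assoc]
  rw [convolutionForm_eq_sum_autocorrelation]
  exact sum_mul_autocorrelation_nonneg hc hre _ M

theorem stmt_13 (g : ℕ → ℝ)
    (hg : ∀ r : ℝ, 1 < r → Summable (fun j : ℕ => |g j| * r⁻¹ ^ j))
    (hpos : ∀ z : ℂ, 1 < ‖z‖ → 0 ≤ (∑' j : ℕ, (g j : ℂ) * z⁻¹ ^ j).re) :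
    ∀ M : ℕ, ∀ W : ℕ → ℝ,
      0 ≤ ∑ j ∈ Finset.range (M + 1),
            (∑ p ∈ Finset.range (j + 1), g p * W (j - p)) * W j := by
  intro M W
  have hcont : Continuous fun t : ℝ =>
      convolutionForm (fun p => g p * t ^ p) (fun j => W j * t ^ j) M := by
    unfold convolutionForm
    fun_prop
  have hlim := (hcont.tendsto 1).mono_left (nhdsWithin_le_nhds (s := Set.Iio 1))
  simpa [convolutionForm] using ge_of_tendsto hlim <| eventually_of_mem (Ioo_mem_nhdsLT one_pos)
    fun t ht => convolutionForm_dilate_nonneg hg hpos ht W M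
end

section
/- Converse direction of the positivity characterization: let $(g_j)_{j\ge0}$ be a real sequence with $G(z)=\sum_{j\ge0} g_j z^{-j}$ absolutely convergent and analytic for $|z|>1$. If for every integer $M\ge0$ and all reals $W_0,\dots,W_M$ one has $\sum_{j=0}^M\left(\sum_{p=0}^j g_p W_{j-p}\right) W_j \ge 0$, then $\Re G(z)\ge0$ for all $|z|>1$. -/
/-!
Put `w = z⁻¹` and `t = |w|²`. Testing the form with `W_j = Re (w̄ ^ j)` and `W_j = Im (w̄ ^ j)`
and adding, `g_p w̄^(j-p) w^j = g_p w^p t^(j-p)` shows that the real parts of the partial sums of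
the Cauchy product of `∑ g_p w^p` with `∑ t^k` are nonnegative. These partial sums converge to
`G(z) / (1 - t)`, so `Re G(z) ≥ 0`.
-/

open Finset Filter Topology ComplexConjugate

def lowerToeplitzForm (g W : ℕ → ℝ) (M : ℕ) : ℝ :=
  ∑ j ∈ range (M + 1), (∑ p ∈ range (j + 1), g p * W (j - p)) * W j

theorem re_lowerToeplitzForm_complex (g : ℕ → ℝ) (W : ℕ → ℂ) (M : ℕ) :
    (∑ j ∈ range (M + 1), (∑ p ∈ range (j + 1), (g p : ℂ) * W (j - p)) * conj (W j)).re =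
      lowerToeplitzForm g (fun j => (W j).re) M + lowerToeplitzForm g (fun j => (W j).im) M := by
  simp only [lowerToeplitzForm, Complex.re_sum, Complex.mul_re, Complex.conj_re,
    Complex.conj_im, Complex.ofReal_re, Complex.ofReal_im, Complex.im_ofReal_mul, sum_mul,
    ← sum_add_distrib]
  refine sum_congr rfl fun j _ => sum_congr rfl fun p _ => ?_
  ring

theorem re_sum_cauchyProduct_normSq_nonneg (g : ℕ → ℝ)
    (hform : ∀ M W, 0 ≤ lowerToeplitzForm g W M) (w : ℂ) (M : ℕ) :
    0 ≤ (∑ j ∈ range (M + 1), ∑ p ∈ range (j + 1),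
      (g p * w ^ p) * (Complex.normSq w : ℂ) ^ (j - p)).re := by
  have hterm : ∀ j, ∀ p ∈ range (j + 1),
      (g p * w ^ p) * (Complex.normSq w : ℂ) ^ (j - p) =
        (g p : ℂ) * conj w ^ (j - p) * conj (conj w ^ j) := by
    intro j p hp
    have hpj : j = (j - p) + p := by simp only [mem_range] at hp; omega
    rw [map_pow, Complex.conj_conj, Complex.normSq_eq_conj_mul_self, hpj, pow_add,
      Nat.add_sub_cancel, mul_pow]
    ring
  rw [sum_congr rfl fun j _ => sum_congr rfl (hterm j)]
  simp only [← sum_mul]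
  rw [re_lowerToeplitzForm_complex]
  exact add_nonneg (hform _ _) (hform _ _)

theorem stmt_14 (g : ℕ → ℝ)
    (hg : ∀ r : ℝ, 1 < r → Summable (fun j : ℕ => |g j| * r⁻¹ ^ j))
    (hform : ∀ M : ℕ, ∀ W : ℕ → ℝ,
      0 ≤ ∑ j ∈ Finset.range (M + 1),
            (∑ p ∈ Finset.range (j + 1), g p * W (j - p)) * W j) :
    ∀ z : ℂ, 1 < ‖z‖ → 0 ≤ (∑' j : ℕ, (g j : ℂ) * z⁻¹ ^ j).re := by
  intro z hz
  set w := z⁻¹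
  have hw : ‖w‖ < 1 := by simpa [w] using inv_lt_one_of_one_lt₀ hz
  have ht : ‖(Complex.normSq w : ℂ)‖ < 1 := by
    simpa [Complex.normSq_eq_norm_sq] using pow_lt_one₀ (norm_nonneg w) hw two_ne_zero
  have hG : Summable fun p => ‖(g p : ℂ) * w ^ p‖ := by
    simpa [w, norm_pow, norm_inv] using hg ‖z‖ hz
  have hprod :=
    hasSum_sum_range_mul_of_summable_norm hG (summable_norm_geometric_of_norm_lt_one ht)
  rw [tsum_geometric_of_norm_lt_one ht] at hprod
  have hre := (Complex.continuous_re.tendsto _).comp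
    (hprod.tendsto_sum_nat.comp (tendsto_add_atTop_nat 1))
  have hnonneg := ge_of_tendsto' hre fun M => re_sum_cauchyProduct_normSq_nonneg g hform w M
  have h1t : 0 < 1 - Complex.normSq w := sub_pos.mpr (lt_of_abs_lt (by simpa using ht))
  rw [← Complex.ofReal_one, ← Complex.ofReal_sub, ← Complex.ofReal_inv,
    Complex.re_mul_ofReal] at hnonneg
  exact nonneg_of_mul_nonneg_left hnonneg (inv_pos.mpr h1t)
end

section
/- Let $0<\alpha<1$ and $z=e^{s_0+i\eta}$ with $s_0>0$. Then $\Re\left[\left(\frac{(3-z^{-1})(1-z^{-1})}{2}\right)^{-\alpha}\right] \ge 0$, where the principal branch of the power is used. -/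
/-! For `‖u‖ ≤ 1` the BDF2 symbol `(3 - u)(1 - u)/2` has real part `(1 - ‖u‖²)/2 + (1 - re u)² ≥ 0`,
so its argument lies in `[-π/2, π/2]`; a real power with exponent in `[-1, 1]` scales the argument
by at most one, so the power stays in the closed right half-plane. -/

open Complex Real

theorem Complex.re_cpow_ofReal_nonneg {w : ℂ} {a : ℝ} (hw : 0 ≤ w.re) (ha : |a| ≤ 1) :
    0 ≤ (w ^ (a : ℂ)).re := by
  rcases eq_or_ne w 0 with rfl | hw0
  · rcases eq_or_ne a 0 with rfl | ha0
    · simp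
    · simp [zero_cpow (ofReal_ne_zero.mpr ha0)]
  have harg : |a * arg w| ≤ π / 2 := by
    rw [abs_mul]
    simpa using mul_le_mul ha (abs_arg_le_pi_div_two_iff.mpr hw) (abs_nonneg _) zero_le_one
  have him : (log w * a).im = a * arg w := by simp [log_im, mul_comm]
  rw [cpow_def_of_ne_zero hw0, exp_re, him]
  exact mul_nonneg (Real.exp_nonneg _) (Real.cos_nonneg_of_mem_Icc (abs_le.mp harg))

noncomputable def bdf2Symbol (u : ℂ) : ℂ := (3 - u) * (1 - u) / 2

theorem re_bdf2Symbol (u : ℂ) :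
    (bdf2Symbol u).re = (1 - ‖u‖ ^ 2) / 2 + (1 - u.re) ^ 2 := by
  rw [Complex.sq_norm, normSq_apply, bdf2Symbol]
  simp only [div_ofNat_re, mul_re, sub_re, sub_im, re_ofNat, im_ofNat, one_re, one_im]
  ring

theorem re_bdf2Symbol_nonneg {u : ℂ} (hu : ‖u‖ ≤ 1) : 0 ≤ (bdf2Symbol u).re := by
  rw [re_bdf2Symbol]
  have : ‖u‖ ^ 2 ≤ 1 := pow_le_one₀ (norm_nonneg u) hu
  positivity

theorem stmt_16 (α s0 η : ℝ) (hα0 : 0 < α) (hα1 : α < 1) (hs0 : 0 < s0)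
    (z : ℂ) (hz : z = Complex.exp (↑s0 + ↑η * Complex.I)) :
    0 ≤ ((((3 - z⁻¹) * (1 - z⁻¹)) / 2) ^ (-(α : ℂ))).re := by
  have hz_inv : ‖z⁻¹‖ ≤ 1 := by
    rw [hz, norm_inv, norm_exp]
    simpa using inv_le_one_of_one_le₀ (Real.one_le_exp hs0.le)
  have hα : |-α| ≤ 1 := by rw [abs_neg, abs_le]; constructor <;> linarith
  simpa [bdf2Symbol] using re_cpow_ofReal_nonneg (re_bdf2Symbol_nonneg hz_inv) hα
end
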